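/- arXiv:math/0501005 — 3 statements merged into one kernel-verified Lean document; each statement's English description precedes it below -/
import Mathlib

section
/- The map sending a binary tree T to the pair (f(T), g(T)) is a bijection from the set of all binary trees onto the set of all pairs (A, B) of binary sequences with A ⪰ B. -/
/-- One move: replace an adjacent pair `10` by `01` (a `1` moves one step right).
`true` encodes the digit 1 and `false` encodes the digit 0. -/
def DomStep (A B : List Bool) : Prop :=
  ∃ X Y : List Bool, A = X ++ true :: false :: Y ∧ B = X ++ false :: true :: Y

/-- `Dom A B` (`A ⪰ B`): `B` is obtained from `A` by finitely many such moves. -/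
def Dom : List Bool → List Bool → Prop := Relation.ReflTransGen DomStep

/-- Binary trees: empty, or a root with a left subtree only, a right subtree only, or both. -/
inductive BTree where
  | empty : BTree
  | left : BTree → BTree
  | right : BTree → BTree
  | both : BTree → BTree → BTree

/-- f(empty) = ε, f = f(L)·0, 1·f(R), or f(L)·01·f(R). -/
def f : BTree → List Bool
  | .empty => []
  | .left L => f L ++ [false]
  | .right R => true :: f R
  | .both L R => f L ++ [false, true] ++ f R

/-- g(empty) = ε, g = 0·g(L), 1·g(R), or 0·g(L)·1·g(R). -/
def g : BTree → List Bool
  | .empty => []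
  | .left L => false :: g L
  | .right R => true :: g R
  | .both L R => false :: (g L ++ true :: g R)

namespace Aux

def cnt (l : List Bool) : ℕ := l.count true

@[simp] lemma cnt_nil : cnt [] = 0 := rfl
@[simp] lemma cnt_cons (a : Bool) (l : List Bool) : cnt (a :: l) = a.toNat + cnt l := by
  cases a <;> simp [cnt, List.count_cons] <;> omega
@[simp] lemma cnt_append (X Y : List Bool) : cnt (X ++ Y) = cnt X + cnt Y := by
  simp [cnt]

lemma cnt_le_length (l : List Bool) : cnt l ≤ l.length := List.count_le_length

def pre (l : List Bool) (k : ℕ) : ℕ := cnt (l.take k)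

@[simp] lemma pre_zero (l : List Bool) : pre l 0 = 0 := rfl
@[simp] lemma pre_nil (k : ℕ) : pre [] k = 0 := by simp [pre]
lemma pre_cons (a : Bool) (l : List Bool) (k : ℕ) :
    pre (a :: l) (k+1) = a.toNat + pre l k := by simp [pre]
lemma pre_append (X Y : List Bool) (k : ℕ) :
    pre (X ++ Y) k = pre X k + pre Y (k - X.length) := by
  simp [pre, List.take_append]
lemma pre_eq_cnt {l : List Bool} {k : ℕ} (h : l.length ≤ k) : pre l k = cnt l := by
  simp [pre, List.take_of_length_le h]
lemma pre_le_self (l : List Bool) (k : ℕ) : pre l k ≤ k :=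
  le_trans (cnt_le_length _) (by simpa using List.length_take_le k l)
lemma pre_le_cnt (l : List Bool) (k : ℕ) : pre l k ≤ cnt l :=
  List.Sublist.count_le _ (List.take_sublist _ _)
lemma pre_mono (l : List Bool) {j k : ℕ} (h : j ≤ k) : pre l j ≤ pre l k := by
  have h1 : (l.take k).take j = l.take j := by rw [List.take_take, min_eq_left h]
  calc pre l j = cnt ((l.take k).take j) := by rw [h1]; rfl
    _ ≤ cnt (l.take k) := List.Sublist.count_le _ (List.take_sublist _ _)
lemma pre_take (l : List Bool) (j k : ℕ) : pre (l.take j) k = pre l (min k j) := by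
  simp [pre, List.take_take]

lemma pre_succ (l : List Bool) (k : ℕ) (h : k < l.length) :
    pre l (k+1) = pre l k + (l.getD k false).toNat := by
  induction l generalizing k with
  | nil => simp at h
  | cons a l ih =>
    cases k with
    | zero => simp [pre_cons]
    | succ k =>
      have h' : k < l.length := by simpa using h
      simp [pre_cons, ih k h']; omega

lemma pre_succ_le (l : List Bool) (k : ℕ) : pre l (k+1) ≤ pre l k + 1 := by
  by_cases h : k < l.length
  · rw [pre_succ l k h]; cases l.getD k false <;> simp
  · push_neg at h
    rw [pre_eq_cnt h, pre_eq_cnt (le_trans h (Nat.le_succ k))]; omega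

lemma drop_eq_cons {l : List Bool} {k : ℕ} (h : k < l.length) :
    l.drop k = l.getD k false :: l.drop (k+1) := by
  induction l generalizing k with
  | nil => simp at h
  | cons a l ih =>
    cases k with
    | zero => simp
    | succ k => simpa using ih (by simpa using h)

lemma pre_add_drop (l : List Bool) (j k : ℕ) :
    pre l (j + k) = pre l j + pre (l.drop j) k := by
  by_cases h : j ≤ l.length
  · conv_lhs => rw [← List.take_append_drop j l]
    rw [pre_append, List.length_take, min_eq_left h, pre_take,
      min_eq_right (Nat.le_add_right j k), Nat.add_sub_cancel_left]
  · push_neg at h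
    rw [List.drop_eq_nil_of_le (le_of_lt h), pre_nil,
      pre_eq_cnt (le_of_lt (lt_of_lt_of_le h (Nat.le_add_right j k))),
      pre_eq_cnt (le_of_lt h)]
    omega

lemma getD_append_left {X Y : List Bool} {k : ℕ} (h : k < X.length) :
    (X ++ Y).getD k false = X.getD k false := by
  induction X generalizing k with
  | nil => simp at h
  | cons a X ih =>
    cases k with
    | zero => simp
    | succ k => simpa using ih (by simpa using h)

lemma getD_append_length (X : List Bool) (y : Bool) (Y : List Bool) :
    (X ++ y :: Y).getD X.length false = y := by
  induction X with
  | nil => simp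
  | cons a X ih => simpa using ih


def Good (A B : List Bool) : Prop :=
  A.length = B.length ∧ cnt A = cnt B ∧ ∀ k, pre B k ≤ pre A k

lemma good_refl (A : List Bool) : Good A A := ⟨rfl, rfl, fun _ => le_rfl⟩

lemma good_trans {A B C : List Bool} (h1 : Good A B) (h2 : Good B C) : Good A C :=
  ⟨h1.1.trans h2.1, h1.2.1.trans h2.2.1, fun k => (h2.2.2 k).trans (h1.2.2 k)⟩

lemma domStep_good {A B : List Bool} (h : DomStep A B) : Good A B := by
  obtain ⟨X, Y, rfl, rfl⟩ := h
  refine ⟨by simp, by simp, ?_⟩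
  intro k
  rw [pre_append, pre_append]
  have hkey : ∀ j, pre (false :: true :: Y) j ≤ pre (true :: false :: Y) j := by
    intro j
    match j with
    | 0 => simp
    | 1 =>
      have h1 : pre (false :: true :: Y) 1 = 0 := by rw [pre_cons]; simp
      have h2 : pre (true :: false :: Y) 1 = 1 := by rw [pre_cons]; simp
      omega
    | (j+2) =>
      rw [pre_cons, pre_cons, pre_cons, pre_cons]
      simp
  exact Nat.add_le_add le_rfl (hkey _)

lemma dom_good {A B : List Bool} (h : Dom A B) : Good A B := by
  induction h with
  | refl => exact good_refl _
  | tail _ hstep ih => exact good_trans ih (domStep_good hstep)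

lemma dom_cons (x : Bool) {A B : List Bool} (h : Dom A B) : Dom (x :: A) (x :: B) := by
  refine Relation.ReflTransGen.lift (x :: ·) (fun a b hab => ?_) _ _ h
  obtain ⟨X, Y, rfl, rfl⟩ := hab
  exact ⟨x :: X, Y, rfl, rfl⟩

lemma dom_append_left (X : List Bool) {A B : List Bool} (h : Dom A B) :
    Dom (X ++ A) (X ++ B) := by
  induction X with
  | nil => simpa
  | cons x X ih => simpa using dom_cons x ih

lemma dom_append_right (Z : List Bool) {A B : List Bool} (h : Dom A B) :
    Dom (A ++ Z) (B ++ Z) := by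
  refine Relation.ReflTransGen.lift (· ++ Z) (fun a b hab => ?_) _ _ h
  obtain ⟨X, Y, rfl, rfl⟩ := hab
  exact ⟨X, Y ++ Z, by simp, by simp⟩

lemma dom_slide (j : ℕ) (T : List Bool) :
    Dom (List.replicate j true ++ false :: T) (false :: (List.replicate j true ++ T)) := by
  induction j with
  | zero => exact Relation.ReflTransGen.refl
  | succ j ih =>
    have h1 : Dom (true :: (List.replicate j true ++ false :: T))
        (true :: false :: (List.replicate j true ++ T)) := dom_cons true ih
    have h2 : DomStep (true :: false :: (List.replicate j true ++ T))
        (false :: true :: (List.replicate j true ++ T)) := ⟨[], _, rfl, rfl⟩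
    have h3 := h1.tail h2
    simpa [List.replicate_succ, Dom] using h3

lemma exists_false_decomp :
    ∀ (A : List Bool), cnt A < A.length → ∃ j T, A = List.replicate j true ++ false :: T := by
  intro A
  induction A with
  | nil => simp
  | cons a A ih =>
    cases a with
    | false => exact fun _ => ⟨0, A, rfl⟩
    | true =>
      intro h
      simp at h
      obtain ⟨j, T, rfl⟩ := ih (by omega)
      exact ⟨j + 1, T, by simp [List.replicate_succ]⟩

lemma cnt_replicate_true (j : ℕ) : cnt (List.replicate j true) = j := by simp [cnt]

lemma pre_replicate_append (j : ℕ) (T : List Bool) (k : ℕ) :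
    pre (List.replicate j true ++ T) k = min k j + pre T (k - j) := by
  rw [pre_append]
  have : pre (List.replicate j true) k = min k j := by
    simp [pre, List.take_replicate, cnt]
  rw [this]
  simp

lemma good_dom : ∀ (B A : List Bool), Good A B → Dom A B := by
  intro B
  induction B with
  | nil =>
    intro A hG
    have : A = [] := List.length_eq_zero_iff.mp (by simpa using hG.1)
    subst this
    exact Relation.ReflTransGen.refl
  | cons b B ih =>
    rintro A ⟨hlen, hcnt, hpre⟩
    obtain ⟨a, A', rfl⟩ : ∃ a A', A = a :: A' := by
      cases A with
      | nil => simp at hlen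
      | cons a A' => exact ⟨a, A', rfl⟩
    have h1 : pre (b :: B) 1 ≤ pre (a :: A') 1 := hpre 1
    rw [pre_cons, pre_cons, pre_zero, pre_zero] at h1
    cases b with
    | true =>
      have ha : a = true := by cases a <;> simp at h1 <;> rfl
      subst ha
      refine dom_cons true (ih A' ⟨by simpa using hlen, ?_, ?_⟩)
      · simp at hcnt; omega
      · intro k
        have := hpre (k + 1)
        rw [pre_cons, pre_cons] at this
        omega
    | false =>
      cases a with
      | false =>
        refine dom_cons false (ih A' ⟨by simpa using hlen, ?_, ?_⟩)
        · simp at hcnt; omega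
        · intro k
          have := hpre (k + 1)
          rw [pre_cons, pre_cons] at this
          omega
      | true =>
        have hlt : cnt (true :: A') < (true :: A').length := by
          have h2 : cnt B ≤ B.length := cnt_le_length B
          simp at hcnt hlen ⊢
          omega
        obtain ⟨j, T, hA⟩ := exists_false_decomp _ hlt
        rw [hA]
        refine (dom_slide j T).trans (dom_cons false (ih _ ⟨?_, ?_, ?_⟩))
        · have := congrArg List.length hA
          simp at this hlen ⊢
          omega
        · have := congrArg cnt hA
          rw [cnt_append, cnt_replicate_true, cnt_cons, cnt_cons] at this
          simp at hcnt this ⊢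
          rw [cnt_replicate_true]
          omega
        · intro k
          rcases le_or_gt k j with hk | hk
          · calc pre B k ≤ k := pre_le_self _ _
              _ ≤ min k j + pre T (k - j) := by omega
              _ = pre (List.replicate j true ++ T) k := (pre_replicate_append j T k).symm
          · have h3 := hpre (k + 1)
            rw [hA] at h3
            rw [pre_cons] at h3
            rw [pre_replicate_append, show k + 1 - j = (k - j) + 1 from by omega,
              pre_cons] at h3
            simp only [Bool.toNat_false, Nat.zero_add] at h3
            rw [pre_replicate_append]
            omega

@[simp] lemma pre_single_false (j : ℕ) : pre [false] j = 0 := by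
  cases j with
  | zero => simp
  | succ j => rw [pre_cons]; simp

lemma good_cons (a : Bool) {X Y : List Bool} (h : Good X Y) : Good (a :: X) (a :: Y) := by
  refine ⟨by simp [h.1], by simp [h.2.1], ?_⟩
  intro k
  cases k with
  | zero => simp
  | succ k => rw [pre_cons, pre_cons]; exact Nat.add_le_add le_rfl (h.2.2 k)

lemma good_left {X X' : List Bool} (h : Good X X') : Good (X ++ [false]) (false :: X') := by
  refine ⟨by simp [h.1], by simp [h.2.1], ?_⟩
  intro k
  cases k with
  | zero => simp
  | succ k =>
    rw [pre_cons, pre_append, pre_single_false]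
    have h1 : pre X' k ≤ pre X k := h.2.2 k
    have h2 : pre X k ≤ pre X (k+1) := pre_mono _ (Nat.le_succ k)
    simp only [Bool.toNat_false]
    omega

lemma good_mid {X X' Y Y' : List Bool} (hL : Good X X') (hR : Good Y Y') :
    Good (X ++ false :: true :: Y) (false :: (X' ++ true :: Y')) := by
  obtain ⟨e1, e2, hp⟩ := hL
  obtain ⟨e1', e2', hp'⟩ := hR
  refine ⟨by simp [e1, e1'] <;> omega, by simp [e2, e2'] <;> omega, ?_⟩
  intro k
  cases k with
  | zero => simp
  | succ k =>
    rw [pre_cons, pre_append, pre_append]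
    rcases le_or_gt k X.length with hk | hk
    · rw [show k - X'.length = 0 from by omega, pre_zero]
      have h1 := hp k
      have h2 : pre X k ≤ pre X (k+1) := pre_mono _ (Nat.le_succ k)
      simp only [Bool.toNat_false]
      omega
    · obtain ⟨d, rfl⟩ : ∃ d, k = X.length + (d + 1) := ⟨k - X.length - 1, by omega⟩
      rw [show X.length + (d + 1) - X'.length = d + 1 from by omega]
      rw [show X.length + (d + 1) + 1 - X.length = (d + 1) + 1 from by omega]
      rw [pre_cons, pre_cons, pre_cons]
      rw [pre_eq_cnt (l := X) (by omega), pre_eq_cnt (l := X') (by omega)]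
      have h1 := hp' d
      simp only [Bool.toNat_false, Bool.toNat_true]
      omega



lemma good_fg : ∀ T : BTree, Good (f T) (g T) := by
  intro T
  induction T with
  | empty => exact good_refl []
  | left L ih => simpa [f, g] using good_left ih
  | right R ih => simpa [f, g] using good_cons true ih
  | both L R ihL ihR =>
    have h := good_mid ihL ihR
    simpa [f, g, List.append_assoc] using h

lemma no_cand (L : BTree) (U V : List Bool) {k : ℕ} (hk1 : 1 ≤ k) (hk2 : k ≤ (f L).length)
    (hB : (false :: (g L ++ V)).getD k false = true) :
    pre (false :: (g L ++ V)) k < pre (f L ++ U) k := by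
  obtain ⟨k, rfl⟩ : ∃ k', k = k' + 1 := ⟨k - 1, by omega⟩
  have hG := good_fg L
  have hlen : (f L).length = (g L).length := hG.1
  have hklt : k < (g L).length := by omega
  rw [List.getD_cons_succ, getD_append_left hklt] at hB
  rw [pre_cons, pre_append, pre_append]
  rw [show k - (g L).length = 0 from by omega, pre_zero]
  have h1 : pre (g L) (k+1) = pre (g L) k + 1 := by
    have := pre_succ (g L) k hklt
    rw [hB] at this
    simpa using this
  have h2 := hG.2.2 (k+1)
  simp only [Bool.toNat_false]
  omega

lemma cand_both (L R : BTree) :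
    pre (f L ++ false :: true :: f R) ((f L).length + 1)
      = pre (false :: (g L ++ true :: g R)) ((f L).length + 1)
    ∧ (false :: (g L ++ true :: g R)).getD ((f L).length + 1) false = true := by
  have hG := good_fg L
  have hlen : (f L).length = (g L).length := hG.1
  constructor
  · rw [pre_append, pre_cons, pre_append]
    rw [pre_eq_cnt (l := f L) (Nat.le_succ _)]
    rw [show (f L).length + 1 - (f L).length = 1 from by omega]
    rw [show (f L).length - (g L).length = 0 from by omega, pre_zero]
    have h1 : pre (false :: true :: f R) 1 = 0 := by rw [pre_cons]; simp
    rw [h1, pre_eq_cnt (l := g L) (by omega)]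
    simp [hG.2.1]
  · rw [List.getD_cons_succ, hlen, getD_append_length]

lemma split_contra {L' R' L : BTree} {U V : List Bool}
    (hA : f L ++ U = f L' ++ false :: true :: f R')
    (hB : false :: (g L ++ V) = false :: (g L' ++ true :: g R'))
    (hlen : (f L').length + 1 ≤ (f L).length) : False := by
  have hc := cand_both L' R'
  have h1 := no_cand L U V (k := (f L').length + 1) (by omega) hlen (by rw [hB]; exact hc.2)
  rw [hA, hB] at h1
  omega

lemma fg_inj : ∀ T T' : BTree, f T = f T' → g T = g T' → T = T' := by
  intro T
  induction T with
  | empty =>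
    intro T' hf hg
    cases T' with
    | empty => rfl
    | left L => simp [g] at hg
    | right R => simp [g] at hg
    | both L R => simp [g] at hg
  | left L ih =>
    intro T' hf hg
    cases T' with
    | empty => simp [g] at hg
    | right R => simp [g] at hg
    | left L' =>
      simp only [f, g, List.cons.injEq] at hf hg
      obtain ⟨h1, -⟩ := List.append_inj' hf rfl
      rw [ih L' h1 hg.2]
    | both L' R' =>
      exfalso
      simp only [f, g] at hf hg
      refine split_contra (L' := L') (R' := R') (L := L) (U := [false]) (V := []) ?_ ?_ ?_
      · simpa using hf
      · rw [List.append_nil]; exact hg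
      · have := congrArg List.length hf; simp at this; omega
  | right R ih =>
    intro T' hf hg
    cases T' with
    | empty => simp [g] at hg
    | left L' => simp [g] at hg
    | both L' R' => simp [g] at hg
    | right R' =>
      simp only [f, g, List.cons.injEq] at hf hg
      rw [ih R' hf.2 hg.2]
  | both L R ihL ihR =>
    intro T' hf hg
    cases T' with
    | empty => simp [g] at hg
    | right R' => simp [g] at hg
    | left L' =>
      exfalso
      simp only [f, g] at hf hg
      refine split_contra (L' := L) (R' := R) (L := L') (U := [false]) (V := []) ?_ ?_ ?_
      · simpa using hf.symm
      · rw [List.append_nil]; exact hg.symm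
      · have := congrArg List.length hf; simp at this; omega
    | both L' R' =>
      simp only [f, g, List.cons.injEq, true_and] at hf hg
      have hf' : f L ++ false :: true :: f R = f L' ++ false :: true :: f R' := by
        simpa using hf
      have hg' : g L ++ true :: g R = g L' ++ true :: g R' := hg
      rcases lt_trichotomy (f L).length (f L').length with h | h | h
      · exact (split_contra (L := L')
          (U := false :: true :: f R') (V := true :: g R') hf'.symm
          (by rw [hg']) (by omega)).elim
      · obtain ⟨hfL, hfR⟩ := List.append_inj hf' h
        have hglen : (g L).length = (g L').length := by
          rw [← (good_fg L).1, ← (good_fg L').1, h]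
        obtain ⟨hgL, hgR⟩ := List.append_inj hg' hglen
        simp only [List.cons.injEq, true_and] at hfR hgR
        rw [ihL L' hfL hgL, ihR R' hfR hgR]
      · exact (split_contra (L := L)
          (U := false :: true :: f R) (V := true :: g R) hf'
          (by rw [hg']) (by omega)).elim


lemma surj : ∀ (n : ℕ) (A B : List Bool), B.length ≤ n → Good A B →
    ∃ T : BTree, f T = A ∧ g T = B := by
  intro n
  induction n with
  | zero =>
    rintro A B hn ⟨hlen, -, -⟩
    have hB : B = [] := List.length_eq_zero_iff.mp (by omega)
    have hA : A = [] := List.length_eq_zero_iff.mp (by omega)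
    exact ⟨.empty, by simp [f, hA], by simp [g, hB]⟩
  | succ n ih =>
    rintro A B hn ⟨hlen, hcnt, hpre⟩
    rcases B with _ | ⟨b, B'⟩
    · have hA : A = [] := List.length_eq_zero_iff.mp (by simpa using hlen)
      exact ⟨.empty, by simp [f, hA], by simp [g]⟩
    cases b with
    | true =>
      obtain ⟨a, A', rfl⟩ : ∃ a A', A = a :: A' := by
        cases A with
        | nil => simp at hlen
        | cons a A' => exact ⟨a, A', rfl⟩
      have h1 := hpre 1
      rw [pre_cons, pre_cons, pre_zero, pre_zero] at h1
      have ha : a = true := by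
        cases a with
        | false => simp at h1
        | true => rfl
      subst ha
      have hG' : Good A' B' := by
        refine ⟨by simpa using hlen, by simp at hcnt; omega, fun k => ?_⟩
        have := hpre (k+1)
        rw [pre_cons, pre_cons] at this
        omega
      obtain ⟨T', hf', hg'⟩ := ih A' B' (by simp at hn; omega) hG'
      exact ⟨.right T', by simp [f, hf'], by simp [g, hg']⟩
    | false =>
      classical
      have hNpos : 1 ≤ A.length := by simp at hlen; omega
      have hPtop : 1 ≤ A.length ∧ pre A A.length = pre (false :: B') A.length ∧
          (A.length = A.length ∨ (false :: B').getD A.length false = true) := by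
        refine ⟨hNpos, ?_, Or.inl rfl⟩
        rw [pre_eq_cnt le_rfl, pre_eq_cnt (le_of_eq hlen.symm), hcnt]
      have hP : ∃ k, 1 ≤ k ∧ pre A k = pre (false :: B') k ∧
          (k = A.length ∨ (false :: B').getD k false = true) := ⟨A.length, hPtop⟩
      obtain ⟨K, ⟨hK1, hKpre, hKor⟩, hmin⟩ :
          ∃ k, (1 ≤ k ∧ pre A k = pre (false :: B') k ∧
              (k = A.length ∨ (false :: B').getD k false = true)) ∧
            ∀ j, j < k → ¬ (1 ≤ j ∧ pre A j = pre (false :: B') j ∧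
              (j = A.length ∨ (false :: B').getD j false = true)) :=
        ⟨Nat.find hP, Nat.find_spec hP, fun j hj => Nat.find_min hP hj⟩
      have hKle : K ≤ A.length := by
        by_contra hcon
        exact hmin A.length (by omega) hPtop
      -- shifted dominance below K
      have hshift : ∀ k, k < K → pre (false :: B') (k+1) ≤ pre A k := by
        intro k hk
        by_contra hcon
        push_neg at hcon
        have h1 : pre (false :: B') (k+1) ≤ pre (false :: B') k + 1 := pre_succ_le _ _
        have h2 : pre (false :: B') k ≤ pre A k := hpre k
        have hklt : k < (false :: B').length := by simp at hlen ⊢; omega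
        have h3 := pre_succ (false :: B') k hklt
        have hBk : (false :: B').getD k false = true := by
          cases hb : (false :: B').getD k false with
          | false => rw [hb] at h3; simp at h3; omega
          | true => rfl
        rw [hBk] at h3
        simp at h3
        have hk1 : 1 ≤ k := by
          rcases Nat.eq_zero_or_pos k with h0 | h0
          · subst h0; simp at hBk
          · exact h0
        exact hmin k hk ⟨hk1, by omega, Or.inr hBk⟩
      -- A has a 0 just before position K
      have hAKm : A.getD (K - 1) false = false := by
        by_contra hcon
        simp only [Bool.not_eq_false] at hcon
        have hKlt : K - 1 < A.length := by omega
        have h3 := pre_succ A (K-1) hKlt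
        rw [hcon] at h3
        simp at h3
        rw [show K - 1 + 1 = K from by omega] at h3
        have h4 : pre (false :: B') K ≤ pre (false :: B') (K-1) + 1 := by
          have := pre_succ_le (false :: B') (K-1)
          rwa [show K - 1 + 1 = K from by omega] at this
        have h5 := hpre (K-1)
        have h7 : (false :: B').getD (K-1) false = true := by
          have h8 := pre_succ (false :: B') (K-1) (by simp at hlen ⊢; omega)
          rw [show K - 1 + 1 = K from by omega] at h8
          cases hb : (false :: B').getD (K-1) false with
          | false => rw [hb] at h8; simp at h8; omega
          | true => rfl
        have hK2 : 2 ≤ K := by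
          by_contra h9
          have h10 : K = 1 := by omega
          rw [h10] at h7
          simp at h7
        exact hmin (K-1) (by omega) ⟨by omega, by omega, Or.inr h7⟩
      rcases eq_or_lt_of_le hKle with hKN | hKN
      · -- left case : K = A.length
        have hAm : A.getD (A.length - 1) false = false := by rw [← hKN]; exact hAKm
        have hA : A = A.take (A.length - 1) ++ [false] := by
          conv_lhs => rw [← List.take_append_drop (A.length - 1) A]
          congr 1
          rw [drop_eq_cons (by omega), hAm,
            show A.length - 1 + 1 = A.length from by omega, List.drop_length]
        have hc1 : cnt (A.take (A.length - 1)) = cnt B' := by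
          have h1 := congrArg cnt hA
          rw [cnt_append] at h1
          simp at h1 hcnt
          omega
        have hG1 : Good (A.take (A.length - 1)) B' := by
          refine ⟨by rw [List.length_take]; simp at hlen ⊢; omega, hc1, fun k => ?_⟩
          rcases le_or_gt (A.length - 1) k with hk | hk
          · rw [pre_eq_cnt (l := A.take (A.length - 1)) (by rw [List.length_take]; omega),
              pre_eq_cnt (l := B') (by simp at hlen; omega), hc1]
          · have h1 := hshift k (by omega)
            rw [pre_cons] at h1
            simp at h1
            have e : min k (A.length - 1) = k := by omega
            rw [pre_take, e]
            exact h1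
        obtain ⟨T₁, hf1, hg1⟩ := ih (A.take (A.length - 1)) B' (by simp at hn; omega) hG1
        refine ⟨.left T₁, ?_, ?_⟩
        · show f T₁ ++ [false] = A
          rw [hf1, ← hA]
        · show false :: g T₁ = false :: B'
          rw [hg1]
      · -- both case : K < A.length
        obtain ⟨m, hm⟩ : ∃ m, K = m + 1 := ⟨K - 1, by omega⟩
        have hAm : A.getD m false = false := by
          rw [show m = K - 1 from by omega]; exact hAKm
        have hBK : (false :: B').getD K false = true := hKor.resolve_left (by omega)
        have hAK : A.getD K false = true := by
          have h1 := pre_succ (false :: B') K (by simp at hlen ⊢; omega)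
          rw [hBK] at h1
          simp at h1
          have h2 := hpre (K+1)
          have h4 := pre_succ A K (by omega)
          cases hb : A.getD K false with
          | false => rw [hb] at h4; simp at h4; omega
          | true => rfl
        have hA : A = A.take m ++ false :: true :: A.drop (K+1) := by
          conv_lhs => rw [← List.take_append_drop m A]
          congr 1
          rw [drop_eq_cons (by omega : m < A.length), hAm,
            show m + 1 = K from hm.symm,
            drop_eq_cons (by omega : K < A.length), hAK]
        have hB'm : B'.getD m false = true := by
          have h1 := hBK
          rw [hm, List.getD_cons_succ] at h1
          exact h1
        have hB : B' = B'.take m ++ true :: B'.drop (m+1) := by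
          conv_lhs => rw [← List.take_append_drop m B']
          congr 1
          rw [drop_eq_cons (by simp at hlen; omega : m < B'.length), hB'm]
        -- pre facts
        have hp1 : pre A (m+1) = pre A m := by
          have h1 := pre_succ A m (by omega)
          rw [hAm] at h1
          simpa using h1
        have hp2 : pre (false :: B') (m+1) = pre B' m := by
          rw [pre_cons]; simp
        have hcnt1 : cnt (A.take m) = cnt (B'.take m) := by
          show pre A m = pre B' m
          rw [← hp1, ← hp2, ← hm]
          exact hKpre
        have hG1 : Good (A.take m) (B'.take m) := by
          refine ⟨?_, hcnt1, fun k => ?_⟩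
          · rw [List.length_take, List.length_take]
            simp at hlen; omega
          rcases le_or_gt m k with hk | hk
          · rw [pre_eq_cnt (l := A.take m) (by rw [List.length_take]; omega),
              pre_eq_cnt (l := B'.take m) (by rw [List.length_take]; omega), hcnt1]
          · have h1 := hshift k (by omega)
            rw [pre_cons] at h1
            simp at h1
            have e : min k m = k := by omega
            rw [pre_take, pre_take, e]
            exact h1
        have hp3 : pre A (K+1) = pre A K + 1 := by
          have h1 := pre_succ A K (by omega)
          rw [hAK] at h1
          simpa using h1
        have hp4 : pre (false :: B') (K+1) = pre (false :: B') K + 1 := by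
          have h1 := pre_succ (false :: B') K (by simp at hlen ⊢; omega)
          rw [hBK] at h1
          simpa using h1
        have hG2 : Good (A.drop (K+1)) (B'.drop (m+1)) := by
          refine ⟨?_, ?_, fun k => ?_⟩
          · rw [List.length_drop, List.length_drop]
            simp at hlen; omega
          · have e1 := congrArg cnt hA
            have e2 := congrArg cnt hB
            simp only [cnt_append, cnt_cons, Bool.toNat_false, Bool.toNat_true] at e1 e2
            simp at hcnt
            omega
          · have e3 := pre_add_drop A (K+1) k
            have e4 := pre_add_drop B' (m+1) k
            have e5 : pre (false :: B') (K + 1 + k) = pre B' (m + 1 + k) := by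
              rw [hm, show m + 1 + 1 + k = (m + 1 + k) + 1 from by omega, pre_cons]
              simp
            have e8 : pre (false :: B') (K + 1) = pre B' (m + 1) := by
              rw [hm, show m + 1 + 1 = (m + 1) + 1 from rfl, pre_cons]
              simp
            have h7 := hpre (K+1+k)
            omega
        obtain ⟨TL, hfL, hgL⟩ := ih (A.take m) (B'.take m)
          (by rw [List.length_take]; simp at hn; omega) hG1
        obtain ⟨TR, hfR, hgR⟩ := ih (A.drop (K+1)) (B'.drop (m+1))
          (by rw [List.length_drop]; simp at hn; omega) hG2
        refine ⟨.both TL TR, ?_, ?_⟩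
        · show f TL ++ [false, true] ++ f TR = A
          rw [hfL, hfR]
          conv_rhs => rw [hA]
          simp
        · show false :: (g TL ++ true :: g TR) = false :: B'
          rw [hgL, hgR]
          conv_rhs => rw [hB]

end Aux


/-- The map T ↦ (f(T), g(T)) is a bijection from binary trees onto the
pairs (A, B) of binary sequences with A ⪰ B. -/
theorem tree_to_dominated_pair_bijective :
    Set.BijOn (fun T : BTree => (f T, g T)) Set.univ
      {p : List Bool × List Bool | Dom p.1 p.2} := by
  refine ⟨?_, ?_, ?_⟩
  · intro T _
    exact Aux.good_dom _ _ (Aux.good_fg T)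
  · intro T _ T' _ h
    simp only [Prod.mk.injEq] at h
    exact Aux.fg_inj T T' h.1 h.2
  · intro p hp
    obtain ⟨T, hf, hg⟩ := Aux.surj p.2.length p.1 p.2 le_rfl (Aux.dom_good hp)
    refine ⟨T, Set.mem_univ T, ?_⟩
    show (f T, g T) = p
    rw [hf, hg]
end

section
/- For every binary tree T, the sequence f(T) dominates the sequence g(T): f(T) ⪰ g(T). -/
lemma dom_refl (A : List Bool) : Dom A A := Relation.ReflTransGen.refl

lemma dom_trans {A B C : List Bool} (h1 : Dom A B) (h2 : Dom B C) : Dom A C :=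
  Relation.ReflTransGen.trans h1 h2

lemma dom_append_left (X : List Bool) {A B : List Bool} (h : Dom A B) :
    Dom (X ++ A) (X ++ B) := by
  refine Relation.ReflTransGen.lift (fun l => X ++ l) ?_ _ _ h
  rintro a b ⟨U, V, rfl, rfl⟩
  exact ⟨X ++ U, V, by simp, by simp⟩

lemma dom_append_right (Y : List Bool) {A B : List Bool} (h : Dom A B) :
    Dom (A ++ Y) (B ++ Y) := by
  refine Relation.ReflTransGen.lift (fun l => l ++ Y) ?_ _ _ h
  rintro a b ⟨U, V, rfl, rfl⟩
  exact ⟨U, V ++ Y, by simp, by simp⟩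

lemma dom_cons (b : Bool) {A B : List Bool} (h : Dom A B) :
    Dom (b :: A) (b :: B) := dom_append_left [b] h

lemma dom_rotate (S : List Bool) : Dom (S ++ [false]) (false :: S) := by
  induction S with
  | nil => exact dom_refl _
  | cons b S ih =>
    cases b with
    | false => exact dom_cons false ih
    | true =>
      refine dom_trans (dom_cons true ih) ?_
      exact Relation.ReflTransGen.single ⟨[], S, rfl, rfl⟩
/-- For every binary tree T, f(T) dominates g(T). -/
theorem f_dominates_g (T : BTree) : Dom (f T) (g T) := by
  induction T with
  | empty => exact dom_refl _
  | left L ih =>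
    exact dom_trans (dom_append_right [false] ih) (dom_rotate _)
  | right R ih =>
    exact dom_cons true ih
  | both L R ihL ihR =>
    show Dom (f L ++ [false, true] ++ f R) (false :: (g L ++ true :: g R))
    have h1 : Dom (f L ++ [false, true] ++ f R) (g L ++ [false, true] ++ g R) := by
      have := dom_append_right ([false, true] ++ f R) ihL
      have h2 := dom_append_left (g L ++ [false, true]) ihR
      simp only [List.append_assoc] at *
      exact dom_trans this h2
    refine dom_trans h1 ?_
    have := dom_append_right (true :: g R) (dom_rotate (g L))
    simpa using this
end

section
/- For every nonempty binary sequence A: W(A) = (W(X) if A = X·0 for some binary sequence X, else 0) + (W(Y) if A = 1·Y for some binary sequence Y, else 0) + the sum of W(X)·W(Y) over all pairs of binary sequences (X, Y) with A = X·01·Y. -/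
/-- The weight W(A): the number of binary sequences dominated by A. -/
noncomputable def W (A : List Bool) : ℕ := Set.ncard {B | Dom A B}

namespace WRaux

/-- prefix count of `true`s among the first `k` entries -/
def pc (C : List Bool) (k : ℕ) : ℕ := (C.take k).count true

lemma count_singleton' (b : Bool) : [b].count true = b.toNat := by cases b <;> rfl

lemma pc_nil (k : ℕ) : pc [] k = 0 := by simp [pc]

lemma pc_zero (C : List Bool) : pc C 0 = 0 := rfl

lemma pc_append (X Y : List Bool) (k : ℕ) :
    pc (X ++ Y) k = pc X k + pc Y (k - X.length) := by
  simp [pc, List.take_append, List.count_append]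

lemma pc_singleton (b : Bool) (k : ℕ) :
    pc [b] k = if k = 0 then 0 else b.toNat := by
  cases k with
  | zero => rfl
  | succ k => simpa [pc] using count_singleton' b

lemma pc_cons_succ (b : Bool) (C : List Bool) (k : ℕ) :
    pc (b :: C) (k + 1) = b.toNat + pc C k := by
  have h : b :: C = [b] ++ C := rfl
  rw [h, pc_append, pc_singleton]
  simp

lemma pc_two (b c : Bool) (Y : List Bool) (t : ℕ) :
    pc (b :: c :: Y) t
      = (if t = 0 then 0 else b.toNat) + (if t ≤ 1 then 0 else c.toNat) + pc Y (t - 2) := by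
  match t with
  | 0 => simp [pc_zero]
  | 1 => simp [pc_cons_succ, pc_zero]
  | (t+2) =>
    have h1 : pc (b :: c :: Y) (t+2) = b.toNat + (c.toNat + pc Y t) := by
      rw [pc_cons_succ, pc_cons_succ]
    have h2 : t + 2 - 2 = t := by omega
    rw [h1, if_neg (by omega), if_neg (by omega), h2]
    omega

lemma pc_mid (X : List Bool) (b c : Bool) (Y : List Bool) (k : ℕ) :
    pc (X ++ b :: c :: Y) k
      = pc X k + ((if k - X.length = 0 then 0 else b.toNat)
        + (if k - X.length ≤ 1 then 0 else c.toNat) + pc Y (k - X.length - 2)) := by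
  rw [pc_append, pc_two]

lemma pc_mono (C : List Bool) {k l : ℕ} (h : k ≤ l) : pc C k ≤ pc C l := by
  have h2 : C.take k = (C.take l).take k := by
    rw [List.take_take, min_eq_left h]
  dsimp [pc]
  rw [h2]
  exact ((C.take l).take_sublist k).count_le _

lemma pc_le_count (C : List Bool) (k : ℕ) : pc C k ≤ C.count true :=
  (C.take_sublist k).count_le _

lemma pc_of_le {C : List Bool} {k : ℕ} (h : C.length ≤ k) : pc C k = C.count true := by
  simp [pc, List.take_of_length_le h]

lemma pc_take (C : List Bool) (i k : ℕ) : pc (C.take i) k = pc C (min k i) := by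
  simp [pc, List.take_take]

lemma pc_succ_le (C : List Bool) (k : ℕ) : pc C (k + 1) ≤ pc C k + 1 := by
  rw [pc, pc, List.take_succ, List.count_append]
  have h : (C[k]?).toList.count true ≤ 1 := by
    cases h : C[k]? with
    | none => simp
    | some b => cases b <;> simp
  omega

lemma pc_succ {C : List Bool} {k : ℕ} (h : k < C.length) :
    pc C (k + 1) = pc C k + (C[k]).toNat := by
  rw [pc, pc, List.take_succ, List.count_append, List.getElem?_eq_getElem h]
  cases hb : C[k] <;> simp [hb]

lemma pc_add (C : List Bool) (j k : ℕ) : pc C (j + k) = pc C j + pc (C.drop j) k := by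
  conv_lhs => rw [← List.take_append_drop j C]
  rw [pc_append, pc_take, List.length_take]
  rcases le_or_gt j C.length with h | h
  · rw [min_eq_left h, min_eq_right (by omega : j ≤ j + k)]
    congr 2
    omega
  · have hd : C.drop j = [] := by
      rw [List.drop_eq_nil_iff]
      omega
    rw [hd, pc_nil, pc_nil, min_eq_right (by omega : j ≤ j + k)]

lemma count_split (C : List Bool) (j : ℕ) :
    C.count true = pc C j + ((C.drop j).count true) := by
  have h := pc_add C j C.length
  have h1 : pc C (j + C.length) = C.count true := pc_of_le (by omega)
  have h2 : pc (C.drop j) C.length = (C.drop j).count true := pc_of_le (by simp)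
  rw [h1, h2] at h
  exact h

lemma ext_pc {C D : List Bool} (hlen : C.length = D.length)
    (h : ∀ k, pc C k = pc D k) : C = D := by
  apply List.ext_getElem hlen
  intro i h1 h2
  have e1 := pc_succ h1
  have e2 := pc_succ h2
  have h3 := h i
  have h4 := h (i + 1)
  cases hc : C[i] <;> cases hd : D[i] <;>
    rw [hc] at e1 <;> rw [hd] at e2 <;> simp at e1 e2 <;> omega

/-- The prefix-count characterization of dominance. -/
def Pre (A B : List Bool) : Prop :=
  B.length = A.length ∧ B.count true = A.count true ∧ ∀ k, pc B k ≤ pc A k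

lemma pre_refl (A : List Bool) : Pre A A := ⟨rfl, rfl, fun _ => le_rfl⟩

lemma pre_of_step {A B : List Bool} (h : DomStep A B) : Pre A B := by
  obtain ⟨X, Y, rfl, rfl⟩ := h
  refine ⟨by simp, by simp [List.count_append, List.count_cons], fun k => ?_⟩
  rw [pc_mid, pc_mid]
  have h1 : k - X.length - 1 = 0 → k - X.length ≤ 1 := by omega
  split_ifs <;> simp_all <;> omega

lemma pre_trans {A B C : List Bool} (h1 : Pre A B) (h2 : Pre B C) : Pre A C :=
  ⟨h2.1.trans h1.1, h2.2.1.trans h1.2.1, fun k => (h2.2.2 k).trans (h1.2.2 k)⟩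

lemma pre_of_dom {A B : List Bool} (h : Dom A B) : Pre A B := by
  induction h with
  | refl => exact pre_refl A
  | tail _ hstep ih => exact pre_trans ih (pre_of_step hstep)

lemma pc_le_self (C : List Bool) (k : ℕ) : pc C k ≤ k := by
  dsimp [pc]
  refine le_trans List.count_le_length ?_
  rw [List.length_take]
  omega

lemma dom_of_pre_aux : ∀ (m : ℕ) (A B : List Bool), Pre A B →
    (∑ k ∈ Finset.range (A.length + 1), (pc A k - pc B k)) = m → Dom A B := by
  intro m
  induction m using Nat.strong_induction_on with
  | _ m ih =>
  intro A B hP hm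
  obtain ⟨hlen, hcnt, hpc⟩ := hP
  by_cases heq : ∀ k, pc A k = pc B k
  · have hBA : B = A := ext_pc (by omega) (fun k => (heq k).symm)
    rw [hBA]
    exact Relation.ReflTransGen.refl
  · push_neg at heq
    obtain ⟨k₀, hk₀⟩ := heq
    have hex : ∃ k, pc B k < pc A k := ⟨k₀, lt_of_le_of_ne (hpc k₀) (fun h => hk₀ h.symm)⟩
    have hexj : ∃ j, pc B j < pc A j ∧ ∀ k < j, ¬ (pc B k < pc A k) :=
      ⟨Nat.find hex, Nat.find_spec hex, fun k hk => Nat.find_min hex hk⟩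
    obtain ⟨j, hjs, hjmin0⟩ := hexj
    have hjmin : ∀ k < j, pc A k = pc B k := fun k hk =>
      le_antisymm (le_of_not_gt (hjmin0 k hk)) (hpc k)
    have hj0 : 0 < j := by
      rcases Nat.eq_zero_or_pos j with h | h
      · rw [h] at hjs; rw [pc_zero, pc_zero] at hjs; omega
      · exact h
    have hjn : j < A.length := by
      by_contra hh
      push_neg at hh
      have h1 : pc A j = A.count true := pc_of_le (by omega)
      have h2 : pc B j = B.count true := pc_of_le (by omega)
      omega
    have hexM : ∃ k, j ≤ k ∧ k < A.length ∧ A[k]? = some false := by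
      by_contra hh
      push_neg at hh
      have hrun : ∀ d, j + d ≤ A.length → pc A j + d ≤ pc A (j + d) := by
        intro d
        induction d with
        | zero => simp
        | succ d ihd =>
          intro hdn
          have h1 : j + d < A.length := by omega
          have h2 : A[j+d]? ≠ some false := hh (j+d) (by omega) h1
          have h3 : A[j+d] = true := by
            cases hb : A[j+d]
            · exact absurd (by rw [List.getElem?_eq_getElem h1, hb]) h2
            · rfl
          have h4 := pc_succ (C := A) (k := j + d) h1
          rw [h3] at h4
          have h5 := ihd (by omega)
          rw [(show j + (d+1) = (j + d) + 1 by omega)]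
          simp only [Bool.toNat_true] at h4
          omega
      have hAn : pc A A.length = A.count true := pc_of_le le_rfl
      have hBn : pc B A.length = A.count true := by
        rw [pc_of_le (by omega)]; exact hcnt
      have h5 := hrun (A.length - j) (by omega)
      rw [(by omega : j + (A.length - j) = A.length)] at h5
      have h6 : pc B A.length ≤ pc B j + (A.length - j) := by
        have h7 := pc_add B j (A.length - j)
        have h8 := pc_le_self (B.drop j) (A.length - j)
        rw [(by omega : j + (A.length - j) = A.length)] at h7
        omega
      omega
    have hexM2 : ∃ M, (j ≤ M ∧ M < A.length ∧ A[M]? = some false)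
        ∧ ∀ k < M, ¬ (j ≤ k ∧ k < A.length ∧ A[k]? = some false) :=
      ⟨Nat.find hexM, Nat.find_spec hexM, fun k hk => Nat.find_min hexM hk⟩
    obtain ⟨M, ⟨hMj, hMn, hMf⟩, hMmin0⟩ := hexM2
    have hMf' : A[M] = false := by
      rw [List.getElem?_eq_getElem hMn] at hMf
      exact Option.some_injective _ hMf
    have hMmin : ∀ k, j ≤ k → k < M → A[k]? = some true := by
      intro k h1 h2
      have h3 := hMmin0 k h2
      push_neg at h3
      have h4 : k < A.length := by omega
      cases hb : A[k]
      · exact absurd (by rw [List.getElem?_eq_getElem h4, hb]) (h3 h1 h4)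
      · rw [List.getElem?_eq_getElem h4, hb]
    have hstrict : ∀ d, j + d ≤ M → pc B (j + d) < pc A (j + d) := by
      intro d
      induction d with
      | zero => intro _; simpa using hjs
      | succ d ihd =>
        intro hdM
        have h0 : j + d < A.length := by omega
        have h1 : A[j + d]? = some true := hMmin _ (by omega) (by omega)
        rw [List.getElem?_eq_getElem h0] at h1
        have h1' : A[j + d] = true := Option.some_injective _ h1
        have h2 := pc_succ (C := A) (k := j + d) h0
        rw [h1'] at h2
        simp only [Bool.toNat_true] at h2
        have h3 := pc_succ_le B (j + d)
        have h4 := ihd (by omega)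
        rw [(show j + (d+1) = (j + d) + 1 by omega)]
        omega
    have hstrictM : pc B M < pc A M := by
      have h := hstrict (M - j) (by omega)
      rw [(by omega : j + (M - j) = M)] at h
      exact h
    have hM1 : M - 1 < A.length := by omega
    have hMtrue : A[M - 1] = true := by
      by_cases hc : j = M
      · have h1 : pc A (M - 1) = pc B (M - 1) := hjmin _ (by omega)
        have h2 : pc B (M - 1) ≤ pc B j := pc_mono B (by omega)
        have h3 := pc_succ (C := A) (k := M - 1) hM1
        rw [(show M - 1 + 1 = j by omega)] at h3
        cases hb : A[M - 1]
        · exfalso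
          rw [hb] at h3
          simp at h3
          omega
        · rfl
      · have h1 := hMmin (M - 1) (by omega) (by omega)
        rw [List.getElem?_eq_getElem hM1] at h1
        exact Option.some_injective _ h1
    have hsurg : A = A.take (M - 1) ++ true :: false :: A.drop (M + 1) := by
      conv_lhs => rw [← List.take_append_drop (M - 1) A]
      congr 1
      rw [List.drop_eq_getElem_cons hM1, hMtrue, (by omega : M - 1 + 1 = M),
        List.drop_eq_getElem_cons hMn, hMf']
    have hXlen : (A.take (M-1)).length = M - 1 := by
      rw [List.length_take]; omega
    set A' := A.take (M - 1) ++ false :: true :: A.drop (M + 1) with hA'def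
    have hstep : DomStep A A' := ⟨_, _, hsurg, rfl⟩
    have e12 : ∀ k, pc A' k + (if k = M then 1 else 0) = pc A k := by
      intro k
      have e1 := congrArg (fun L => pc L k) hsurg
      rw [pc_mid, hXlen] at e1
      have e2 : pc A' k = pc (A.take (M-1)) k
          + ((if k - (M-1) = 0 then 0 else (false : Bool).toNat)
            + (if k - (M-1) ≤ 1 then 0 else (true : Bool).toNat)
            + pc (A.drop (M+1)) (k - (M-1) - 2)) := by
        rw [hA'def, pc_mid, hXlen]
      rw [e1, e2]
      simp only [Bool.toNat_true, Bool.toNat_false]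
      split_ifs <;> omega
    have hA'len : A'.length = A.length := by
      rw [hA'def]
      conv_rhs => rw [hsurg]
      simp
    have hMmem : M ∈ Finset.range (A.length + 1) := by
      simp; omega
    have h1 : ∑ k ∈ (Finset.range (A.length + 1)).erase M, (pc A' k - pc B k)
        = ∑ k ∈ (Finset.range (A.length + 1)).erase M, (pc A k - pc B k) := by
      refine Finset.sum_congr rfl (fun k hk => ?_)
      have hkM : k ≠ M := (Finset.mem_erase.mp hk).1
      have := e12 k
      rw [if_neg hkM] at this
      omega
    have h2 : pc A' M + 1 = pc A M := by
      have := e12 M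
      rw [if_pos rfl] at this
      exact this
    have hsum : (∑ k ∈ Finset.range (A.length + 1), (pc A' k - pc B k)) + 1 = m := by
      rw [← hm, ← Finset.add_sum_erase _ _ hMmem, ← Finset.add_sum_erase _ _ hMmem, h1]
      omega
    have hpre' : Pre A' B := by
      refine ⟨by omega, ?_, ?_⟩
      · have hc : A'.count true = A.count true := by
          rw [hA'def]
          conv_rhs => rw [hsurg]
          simp [List.count_append, List.count_cons]
        rw [hcnt, hc]
      · intro k
        have := e12 k
        by_cases hk : k = M
        · subst hk
          omega
        · rw [if_neg hk] at this
          have h4 := hpc k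
          omega
    have hmeas : (∑ k ∈ Finset.range (A'.length + 1), (pc A' k - pc B k)) = m - 1 := by
      rw [hA'len]
      omega
    exact Relation.ReflTransGen.head hstep (ih (m-1) (by omega) A' B hpre' hmeas)

lemma dom_of_pre {A B : List Bool} (h : Pre A B) : Dom A B :=
  dom_of_pre_aux _ A B h rfl

lemma dom_iff_pre (A B : List Bool) : Dom A B ↔ Pre A B :=
  ⟨pre_of_dom, dom_of_pre⟩

lemma finite_dom (A : List Bool) : {B | Dom A B}.Finite := by
  apply (List.finite_length_eq Bool A.length).subset
  intro B hB
  exact (pre_of_dom hB).1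

/-- the set of sequences dominated by `A`, as a finset -/
noncomputable def SF (A : List Bool) : Finset (List Bool) := (finite_dom A).toFinset

lemma mem_SF {A B : List Bool} : B ∈ SF A ↔ Pre A B := by
  rw [SF, Set.Finite.mem_toFinset]
  exact dom_iff_pre A B

lemma W_eq (A : List Bool) : W A = (SF A).card :=
  Set.ncard_eq_toFinset_card _ _

lemma count_cons' (b : Bool) (C : List Bool) :
    (b :: C).count true = b.toNat + C.count true := by
  cases b <;> simp [List.count_cons] <;> omega

lemma count_concat' (C : List Bool) (b : Bool) :
    (C ++ [b]).count true = C.count true + b.toNat := by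
  rw [List.count_append, count_singleton']

lemma pc_concat (C : List Bool) (b : Bool) (k : ℕ) :
    pc (C ++ [b]) k = pc C k + if k ≤ C.length then 0 else b.toNat := by
  rw [pc_append, pc_singleton]
  congr 1
  split_ifs <;> omega

lemma pc_concat_false (C : List Bool) (k : ℕ) : pc (C ++ [false]) k = pc C k := by
  rw [pc_concat]
  split_ifs <;> simp

lemma pc_concat_true (C : List Bool) (k : ℕ) :
    pc (C ++ [true]) k = pc C k + if k ≤ C.length then 0 else 1 := by
  rw [pc_concat]
  simp

lemma concat_decomp {C : List Bool} (h : C ≠ []) : ∃ C' b, C = C' ++ [b] := by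
  rcases C.eq_nil_or_concat' with h' | h'
  · exact absurd h' h
  · exact h'

/-- the "violation at k" condition -/
def Kc (A B : List Bool) (k : ℕ) : Prop :=
  k + 2 ≤ A.length ∧ pc B k < A.count true ∧ pc A (k + 1) ≤ pc B k

open scoped Classical in
noncomputable def F1 (A : List Bool) : Finset (List Bool) :=
  (SF A).filter (fun B => B.getLast? = some false)

noncomputable def F2 (A : List Bool) : Finset (List Bool) :=
  @Finset.filter _ (fun B => B.getLast? = some true ∧ ∀ k, ¬ Kc A B k)
    (fun _ => Classical.propDecidable _) (SF A)

noncomputable def F3 (A : List Bool) (i : ℕ) : Finset (List Bool) :=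
  @Finset.filter _ (fun B => B.getLast? = some true ∧ Kc A B i ∧ ∀ k, i < k → ¬ Kc A B k)
    (fun _ => Classical.propDecidable _) (SF A)

lemma mem_F1 {A B : List Bool} : B ∈ F1 A ↔ Pre A B ∧ B.getLast? = some false := by
  rw [F1, Finset.mem_filter, mem_SF]

lemma mem_F2 {A B : List Bool} :
    B ∈ F2 A ↔ Pre A B ∧ B.getLast? = some true ∧ ∀ k, ¬ Kc A B k := by
  rw [F2]
  simp only [Finset.mem_filter, mem_SF]

lemma mem_F3 {A B : List Bool} {i : ℕ} :
    B ∈ F3 A i ↔ Pre A B ∧ B.getLast? = some true ∧ Kc A B i ∧ ∀ k, i < k → ¬ Kc A B k := by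
  rw [F3]
  simp only [Finset.mem_filter, mem_SF]

lemma card_F1 (A : List Bool) (hA : A ≠ []) :
    (F1 A).card = if A.getLast? = some false then W A.dropLast else 0 := by
  obtain ⟨A', a, rfl⟩ := concat_decomp hA
  rw [List.getLast?_concat, List.dropLast_concat]
  cases a with
  | true =>
    rw [if_neg (by simp), Finset.card_eq_zero, Finset.eq_empty_iff_forall_notMem]
    intro B hB
    rw [mem_F1] at hB
    obtain ⟨⟨hlen, hcnt, hpc⟩, hBl⟩ := hB
    have hBne : B ≠ [] := by
      intro h
      rw [h] at hBl
      simp at hBl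
    obtain ⟨B', b, rfl⟩ := concat_decomp hBne
    rw [List.getLast?_concat, Option.some_inj] at hBl
    subst hBl
    have hlen' : B'.length = A'.length := by
      simp at hlen
      omega
    have hkey := hpc A'.length
    rw [pc_concat_false, pc_concat_true, if_pos le_rfl] at hkey
    rw [count_concat', count_concat'] at hcnt
    simp at hcnt
    have h1 : pc B' A'.length = B'.count true := pc_of_le (by omega)
    have h2 : pc A' A'.length = A'.count true := pc_of_le le_rfl
    omega
  | false =>
    rw [if_pos rfl, W_eq]
    refine Finset.card_nbij' (fun B => B.dropLast) (fun C => C ++ [false]) ?_ ?_ ?_ ?_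
    · intro B hB
      rw [Finset.mem_coe, mem_F1] at hB
      obtain ⟨⟨hlen, hcnt, hpc⟩, hBl⟩ := hB
      have hBne : B ≠ [] := by
        intro h
        rw [h] at hBl
        simp at hBl
      obtain ⟨B', b, rfl⟩ := concat_decomp hBne
      rw [List.getLast?_concat, Option.some_inj] at hBl
      subst hBl
      simp only [List.dropLast_concat, Finset.mem_coe, mem_SF]
      refine ⟨?_, ?_, fun k => ?_⟩
      · simp at hlen ⊢
        omega
      · rw [count_concat', count_concat'] at hcnt
        simpa using hcnt
      · have h := hpc k
        rwa [pc_concat_false, pc_concat_false] at h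
    · intro C hC
      rw [Finset.mem_coe, mem_SF] at hC
      obtain ⟨hlen, hcnt, hpc⟩ := hC
      rw [Finset.mem_coe, mem_F1]
      refine ⟨⟨by simp [hlen], ?_, fun k => ?_⟩, List.getLast?_concat⟩
      · rw [count_concat', count_concat']
        simpa using hcnt
      · rw [pc_concat_false, pc_concat_false]
        exact hpc k
    · intro B hB
      rw [Finset.mem_coe, mem_F1] at hB
      obtain ⟨_, hBl⟩ := hB
      have hBne : B ≠ [] := by
        intro h
        rw [h] at hBl
        simp at hBl
      obtain ⟨B', b, rfl⟩ := concat_decomp hBne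
      rw [List.getLast?_concat, Option.some_inj] at hBl
      simp only [List.dropLast_concat, hBl]
    · intro C _
      simp only [List.dropLast_concat]

lemma card_F2 (A : List Bool) (hA : A ≠ []) :
    (F2 A).card = if A.head? = some true then W A.tail else 0 := by
  obtain ⟨a, T, rfl⟩ : ∃ a T, A = a :: T := by
    cases A with
    | nil => exact absurd rfl hA
    | cons a T => exact ⟨a, T, rfl⟩
  rw [List.head?_cons, List.tail_cons]
  cases a with
  | false =>
    rw [if_neg (by simp), Finset.card_eq_zero, Finset.eq_empty_iff_forall_notMem]
    intro B hB
    rw [mem_F2] at hB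
    obtain ⟨⟨hlen, hcnt, hpc⟩, hBl, hK⟩ := hB
    have hBne : B ≠ [] := by
      intro h
      rw [h] at hBl
      simp at hBl
    obtain ⟨B', b, rfl⟩ := concat_decomp hBne
    rw [List.getLast?_concat, Option.some_inj] at hBl
    subst hBl
    rw [count_concat', count_cons'] at hcnt
    simp only [Bool.toNat_true, Bool.toNat_false] at hcnt
    have hs1 : 1 ≤ T.count true := by omega
    have hn : 2 ≤ (false :: T).length := by
      rcases T with _ | ⟨t, T'⟩
      · simp at hs1
      · simp only [List.length_cons]
        omega
    refine hK 0 ⟨hn, ?_, ?_⟩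
    · rw [pc_zero, count_cons']
      simp only [Bool.toNat_false]
      omega
    · have h1 : pc (false :: T) 1 = 0 := by
        rw [pc_cons_succ, pc_zero]
        simp
      rw [h1, pc_zero]
  | true =>
    rw [if_pos rfl, W_eq]
    refine Finset.card_nbij' (fun B => B.dropLast) (fun C => C ++ [true]) ?_ ?_ ?_ ?_
    · intro B hB
      rw [Finset.mem_coe, mem_F2] at hB
      obtain ⟨⟨hlen, hcnt, hpc⟩, hBl, hK⟩ := hB
      have hBne : B ≠ [] := by
        intro h
        rw [h] at hBl
        simp at hBl
      obtain ⟨B', b, rfl⟩ := concat_decomp hBne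
      rw [List.getLast?_concat, Option.some_inj] at hBl
      subst hBl
      simp only [List.dropLast_concat, Finset.mem_coe, mem_SF]
      have hlen' : B'.length = T.length := by
        simp at hlen
        omega
      have hcnt' : B'.count true + 1 = T.count true + 1 := by
        rw [count_concat'] at hcnt
        simp [List.count_cons] at hcnt
        omega
      refine ⟨by omega, by omega, fun k => ?_⟩
      by_cases hk : k < B'.length
      · -- use ¬ Kc at k
        have hnk := hK k
        rw [Kc] at hnk
        push_neg at hnk
        have h2 : k + 2 ≤ (true :: T).length := by simp; omega
        have h3 : pc (B' ++ [true]) k = pc B' k := by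
          rw [pc_concat_true, if_pos (by omega)]
          omega
        have h4 : pc B' k < (true :: T).count true := by
          have h5 : pc B' k ≤ B'.count true := pc_le_count B' k
          simp [List.count_cons]
          omega
        have h6 := hnk h2 (by rw [h3]; exact h4)
        rw [h3, pc_cons_succ] at h6
        simp at h6
        omega
      · -- both sides are total counts
        have h1 : pc B' k = B'.count true := pc_of_le (by omega)
        have h2 : pc T k = T.count true := pc_of_le (by omega)
        omega
    · intro C hC
      rw [Finset.mem_coe, mem_SF] at hC
      obtain ⟨hlen, hcnt, hpc⟩ := hC
      rw [Finset.mem_coe, mem_F2]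
      refine ⟨⟨by simp [hlen], ?_, fun k => ?_⟩, List.getLast?_concat, fun k hk => ?_⟩
      · rw [count_concat']
        simp [List.count_cons]
        omega
      · cases k with
        | zero => rw [pc_zero, pc_zero]
        | succ k =>
          rw [pc_cons_succ, pc_concat_true]
          simp only [Bool.toNat_true]
          by_cases hk : k + 1 ≤ C.length
          · rw [if_pos hk]
            have h1 := pc_succ_le C k
            have h2 := hpc k
            omega
          · rw [if_neg hk]
            have h1 : pc C (k+1) = C.count true := pc_of_le (by omega)
            have h2 : pc T k = T.count true := pc_of_le (by omega)
            omega
      · obtain ⟨hk2, hks, hkle⟩ := hk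
        rw [pc_cons_succ] at hkle
        simp only [Bool.toNat_true] at hkle
        have h3 : pc (C ++ [true]) k = pc C k := by
          rw [pc_concat_true, if_pos (by simp at hk2; omega)]
          omega
        simp only [h3] at hkle hks
        have h4 := hpc k
        omega
    · intro B hB
      rw [Finset.mem_coe, mem_F2] at hB
      obtain ⟨_, hBl, _⟩ := hB
      have hBne : B ≠ [] := by
        intro h
        rw [h] at hBl
        simp at hBl
      obtain ⟨B', b, rfl⟩ := concat_decomp hBne
      rw [List.getLast?_concat, Option.some_inj] at hBl
      simp only [List.dropLast_concat, hBl]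
    · intro C _
      simp only [List.dropLast_concat]

lemma pc_cons_false (E : List Bool) (t : ℕ) : pc (false :: E) t = pc E (t - 1) := by
  cases t with
  | zero => rw [pc_zero, pc_zero]
  | succ t => rw [pc_cons_succ]; simp

lemma F3_elim {A B : List Bool} {i : ℕ} (hB : B ∈ F3 A i) :
    A = A.take i ++ false :: true :: A.drop (i + 2) := by
  rw [mem_F3] at hB
  obtain ⟨⟨hlen, hcnt, hpc⟩, hBl, ⟨hi2, his, hile⟩, hmax⟩ := hB
  have e0 : pc B i = pc A i := le_antisymm (hpc i) (le_trans (pc_mono A (by omega)) hile)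
  have eA : pc A (i+1) = pc A i :=
    le_antisymm (le_trans hile (le_of_eq e0)) (pc_mono A (by omega))
  have hA2 : pc A (i+2) = pc A i + 1 := by
    have hub := pc_succ_le A (i+1)
    rw [(show i + 1 + 1 = i + 2 by omega)] at hub
    have hmono := pc_mono A (show i+1 ≤ i+2 by omega)
    by_contra hne
    have hle2 : pc A (i+2) ≤ pc A i := by omega
    rcases eq_or_lt_of_le hi2 with hcase | hcase
    · have hs : pc A (i+2) = A.count true := pc_of_le (by omega)
      omega
    · refine hmax (i+1) (by omega) ⟨by omega, ?_, ?_⟩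
      · have h1 : pc B (i+1) ≤ pc A (i+1) := hpc _
        omega
      · have h1 : pc B i ≤ pc B (i+1) := pc_mono B (by omega)
        rw [(show i + 1 + 1 = i + 2 by omega)]
        omega
  have hiL : i < A.length := by omega
  have hi1L : i + 1 < A.length := by omega
  have hfi : A[i] = false := by
    have h := pc_succ (C := A) (k := i) hiL
    cases hb : A[i]
    · rfl
    · exfalso
      rw [hb] at h
      simp at h
      omega
  have hti : A[i+1] = true := by
    have h := pc_succ (C := A) (k := i+1) hi1L
    rw [(show i + 1 + 1 = i + 2 by omega)] at h
    cases hb : A[i+1]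
    · exfalso
      rw [hb] at h
      simp at h
      omega
    · rfl
  conv_lhs => rw [← List.take_append_drop i A]
  congr 1
  rw [List.drop_eq_getElem_cons hiL, hfi, List.drop_eq_getElem_cons hi1L, hti,
    (show i + 1 + 1 = i + 2 by omega)]

lemma occ_pc {A : List Bool} {i : ℕ} (hocc : A = A.take i ++ false :: true :: A.drop (i + 2)) :
    i + 2 ≤ A.length
    ∧ pc A i = (A.take i).count true
    ∧ pc A (i+1) = (A.take i).count true
    ∧ (∀ k, pc A (i + 2 + k) = (A.take i).count true + 1 + pc (A.drop (i+2)) k)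
    ∧ A.count true = (A.take i).count true + 1 + (A.drop (i+2)).count true := by
  have hlenA := congrArg List.length hocc
  simp only [List.length_append, List.length_cons, List.length_take, List.length_drop] at hlenA
  have hi2 : i + 2 ≤ A.length := by omega
  have hXlen : (A.take i).length = i := by rw [List.length_take]; omega
  have hpcA : ∀ k, pc A k = pc (A.take i) k
      + ((if k - i = 0 then 0 else 0) + (if k - i ≤ 1 then 0 else 1)
        + pc (A.drop (i+2)) (k - i - 2)) := by
    intro k
    have h := congrArg (fun L => pc L k) hocc
    rw [pc_mid, hXlen] at h
    simpa using h
  have hX : ∀ k, i ≤ k → pc (A.take i) k = (A.take i).count true := fun k hk =>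
    pc_of_le (by omega)
  refine ⟨hi2, ?_, ?_, ?_, ?_⟩
  · have h := hpcA i
    rw [hX i le_rfl, (show i - i = 0 by omega)] at h
    simpa [pc_zero] using h
  · have h := hpcA (i+1)
    rw [hX (i+1) (by omega), (show i + 1 - i = 1 by omega)] at h
    simpa [pc_zero] using h
  · intro k
    have h := hpcA (i+2+k)
    rw [hX (i+2+k) (by omega), (show i + 2 + k - i = 2 + k by omega),
      (show 2 + k - 2 = k by omega), if_neg (by omega), if_neg (by omega)] at h
    omega
  · have h := congrArg (List.count true) hocc
    rw [List.count_append, count_cons', count_cons'] at h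
    simp only [Bool.toNat_false, Bool.toNat_true] at h
    omega

lemma card_F3 (A : List Bool) (i : ℕ) :
    (F3 A i).card = if A = A.take i ++ false :: true :: A.drop (i + 2)
      then W (A.take i) * W (A.drop (i + 2)) else 0 := by
  by_cases hocc : A = A.take i ++ false :: true :: A.drop (i + 2)
  case neg =>
    rw [if_neg hocc, Finset.card_eq_zero, Finset.eq_empty_iff_forall_notMem]
    intro B hB
    exact hocc (F3_elim hB)
  case pos =>
    rw [if_pos hocc, W_eq, W_eq, ← Finset.card_product]
    obtain ⟨hi2, hAi, hAi1, hAk, hAcnt⟩ := occ_pc hocc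
    refine Finset.card_nbij' (fun B => (B.take i, (B.drop (i+1)).dropLast))
      (fun p => p.1 ++ false :: (p.2 ++ [true])) ?_ ?_ ?_ ?_
    · -- forward membership
      intro B hB
      rw [Finset.mem_coe, mem_F3] at hB
      obtain ⟨⟨hlen, hcnt, hpc⟩, hBl, ⟨_, his, hile⟩, hmax⟩ := hB
      have e0 : pc B i = pc A i := le_antisymm (hpc i) (le_trans (pc_mono A (by omega)) hile)
      have eB1 : pc B (i+1) = pc A i := by
        have h1 := hpc (i+1)
        have h2 := pc_mono B (show i ≤ i+1 by omega)
        omega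
      have hBne : B ≠ [] := by
        intro h
        rw [h] at hBl
        simp at hBl
      obtain ⟨B', b, rfl⟩ := concat_decomp hBne
      rw [List.getLast?_concat, Option.some_inj] at hBl
      subst hBl
      have hlenB' : B'.length = A.length - 1 := by
        simp only [List.length_append, List.length_cons, List.length_nil] at hlen
        omega
      have hcntB' : B'.count true + 1 = A.count true := by
        rw [count_concat'] at hcnt
        simpa using hcnt
      have hpcB' : ∀ k, k ≤ B'.length → pc (B' ++ [true]) k = pc B' k := by
        intro k hk
        rw [pc_concat_true, if_pos hk]
        omega
      have h7 : pc B' (i+1) = pc A i := by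
        rw [← hpcB' (i+1) (by omega)]
        exact eB1
      have h7i : pc B' i = pc A i := by
        rw [← hpcB' i (by omega)]
        exact e0
      have ht : (B' ++ [true]).take i = B'.take i := by
        rw [List.take_append, (show i - B'.length = 0 by omega)]
        simp
      have hd : (B' ++ [true]).drop (i+1) = B'.drop (i+1) ++ [true] := by
        rw [List.drop_append, (show i + 1 - B'.length = 0 by omega)]
        simp
      simp only [Finset.mem_coe, Finset.mem_product, ht, hd, List.dropLast_concat, mem_SF]
      constructor
      · refine ⟨?_, ?_, fun k => ?_⟩
        · rw [List.length_take, List.length_take]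
          omega
        · have h1 : (B'.take i).count true = pc B' i := rfl
          rw [h1, ← hAi]
          exact h7i
        · rw [pc_take, pc_take]
          have h4 : pc B' (min k i) = pc (B' ++ [true]) (min k i) :=
            (hpcB' _ (by omega)).symm
          rw [h4]
          exact hpc _
      · refine ⟨?_, ?_, fun k => ?_⟩
        · rw [List.length_drop, List.length_drop]
          omega
        · have h5 := count_split B' (i+1)
          omega
        · have h8 := pc_add B' (i+1) k
          have h9 := hAk k
          cases k with
          | zero => simp [pc_zero]
          | succ k' =>
            have h10 : i + 1 + (k'+1) = i + 2 + k' := by omega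
            rw [h10] at h8
            have hkey : pc B' (i + 2 + k') < pc A (i + 2 + k' + 1) := by
              by_cases hreg : i + 2 + k' + 2 ≤ A.length
              · have hmx := hmax (i + 2 + k') (by omega)
                rw [Kc] at hmx
                push_neg at hmx
                have hb1 : pc (B' ++ [true]) (i+2+k') = pc B' (i+2+k') :=
                  hpcB' _ (by omega)
                have hb2 : pc B' (i+2+k') < A.count true := by
                  have := pc_le_count B' (i+2+k')
                  omega
                have := hmx hreg (by omega)
                omega
              · have hb3 : pc B' (i+2+k') ≤ B'.count true := pc_le_count _ _
                have hb4 : pc A (i+2+k'+1) = A.count true := pc_of_le (by omega)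
                omega
            have h11 := hAk (k' + 1)
            rw [(show i + 2 + (k' + 1) = i + 2 + k' + 1 by omega)] at h11
            have h12 : pc (A.drop (i+2)) (k'+1) ≥ pc A (i+2+k'+1) -
              ((A.take i).count true + 1) := by omega
            omega
    · -- backward membership
      intro p hp
      obtain ⟨C, D⟩ := p
      simp only [Finset.mem_coe, Finset.mem_product, mem_SF] at hp
      obtain ⟨⟨hClen, hCcnt, hCpc⟩, ⟨hDlen, hDcnt, hDpc⟩⟩ := hp
      have hCl : C.length = i := by
        rw [hClen, List.length_take]
        omega
      have hDl : D.length = A.length - i - 2 := by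
        rw [hDlen, List.length_drop]
        omega
      show C ++ false :: (D ++ [true]) ∈ F3 A i
      have hpcB : ∀ k, pc (C ++ false :: (D ++ [true])) k
          = pc C k + (pc D (k - i - 1) + if k - i - 1 ≤ D.length then 0 else 1) := by
        intro k
        rw [pc_append, hCl, pc_cons_false, pc_concat_true]
      have hCk : ∀ k, i ≤ k → pc C k = (A.take i).count true := by
        intro k hk
        rw [pc_of_le (by omega)]
        exact hCcnt
      rw [mem_F3]
      refine ⟨⟨?_, ?_, fun k => ?_⟩, ?_, ⟨hi2, ?_, ?_⟩, ?_⟩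
      · simp only [List.length_append, List.length_cons, List.length_nil]
        omega
      · rw [List.count_append, count_cons', count_concat']
        simp only [Bool.toNat_false, Bool.toNat_true]
        omega
      · rw [hpcB k]
        by_cases hki : k ≤ i
        · have h1 : k - i - 1 = 0 := by omega
          rw [h1, pc_zero, if_pos (by omega)]
          have h2 := hCpc k
          rw [pc_take, min_eq_left hki] at h2
          omega
        · push_neg at hki
          by_cases hkn : k + 1 ≤ A.length
          · have hkd : k - i - 1 ≤ D.length := by omega
            rw [if_pos hkd, hCk k (by omega)]
            by_cases hk1 : k = i + 1
            · subst hk1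
              rw [(show i + 1 - i - 1 = 0 by omega), pc_zero]
              omega
            · have h3 := hAk (k - i - 2)
              rw [(show i + 2 + (k - i - 2) = k by omega)] at h3
              have h4 : pc D (k-i-1) ≤ pc D (k-i-2) + 1 := by
                have h := pc_succ_le D (k-i-2)
                rw [(show k - i - 2 + 1 = k - i - 1 by omega)] at h
                exact h
              have h5 := hDpc (k-i-2)
              omega
          · have h1 : pc A k = A.count true := pc_of_le (by omega)
            rw [if_neg (by omega), hCk k (by omega), pc_of_le (show D.length ≤ k - i - 1 by omega)]
            omega
      · have hsh : C ++ false :: (D ++ [true]) = (C ++ false :: D) ++ [true] := by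
          simp
        rw [hsh, List.getLast?_concat]
      · rw [hpcB i, (show i - i - 1 = 0 by omega), pc_zero, if_pos (by omega), hCk i le_rfl]
        omega
      · rw [hpcB i, (show i - i - 1 = 0 by omega), pc_zero, if_pos (by omega), hCk i le_rfl, hAi1]
        omega
      · intro k hk
        rw [Kc]
        push_neg
        intro hk2 _
        rw [hpcB k, if_pos (by omega), hCk k (by omega)]
        have h3 := hAk (k - i - 1)
        rw [(show i + 2 + (k - i - 1) = k + 1 by omega)] at h3
        have h5 := hDpc (k - i - 1)
        omega
    · -- left inverse
      intro B hB
      rw [Finset.mem_coe, mem_F3] at hB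
      obtain ⟨⟨hlen, hcnt, hpc⟩, hBl, ⟨_, his, hile⟩, hmax⟩ := hB
      have e0 : pc B i = pc A i := le_antisymm (hpc i) (le_trans (pc_mono A (by omega)) hile)
      have eB1 : pc B (i+1) = pc A i := by
        have h1 := hpc (i+1)
        have h2 := pc_mono B (show i ≤ i+1 by omega)
        omega
      have hBne : B ≠ [] := by
        intro h
        rw [h] at hBl
        simp at hBl
      obtain ⟨B', b, rfl⟩ := concat_decomp hBne
      rw [List.getLast?_concat, Option.some_inj] at hBl
      subst hBl
      have hlenB' : B'.length = A.length - 1 := by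
        simp only [List.length_append, List.length_cons, List.length_nil] at hlen
        omega
      have hpcB' : ∀ k, k ≤ B'.length → pc (B' ++ [true]) k = pc B' k := by
        intro k hk
        rw [pc_concat_true, if_pos hk]
        omega
      have hiB : i < B'.length := by omega
      have hBfi : B'[i] = false := by
        have h := pc_succ (C := B') (k := i) hiB
        have h1 : pc B' (i+1) = pc B' i := by
          rw [← hpcB' (i+1) (by omega), ← hpcB' i (by omega)]
          rw [eB1, e0]
        cases hb : B'[i]
        · rfl
        · exfalso
          rw [hb] at h
          simp at h
          omega
      have ht : (B' ++ [true]).take i = B'.take i := by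
        rw [List.take_append, (show i - B'.length = 0 by omega)]
        simp
      have hd : (B' ++ [true]).drop (i+1) = B'.drop (i+1) ++ [true] := by
        rw [List.drop_append, (show i + 1 - B'.length = 0 by omega)]
        simp
      simp only [ht, hd, List.dropLast_concat]
      have hsurgB : B' = B'.take i ++ false :: B'.drop (i+1) := by
        conv_lhs => rw [← List.take_append_drop i B']
        congr 1
        rw [List.drop_eq_getElem_cons hiB, hBfi]
      conv_rhs => rw [hsurgB]
      simp [List.append_assoc]
    · -- right inverse
      intro p hp
      obtain ⟨C, D⟩ := p
      simp only [Finset.mem_coe, Finset.mem_product, mem_SF] at hp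
      obtain ⟨⟨hClen, _, _⟩, _⟩ := hp
      have hCl : C.length = i := by
        rw [hClen, List.length_take]
        omega
      have h1 : (C ++ false :: (D ++ [true])).take i = C := by
        rw [List.take_append, (show i - C.length = 0 by omega)]
        rw [List.take_of_length_le (by omega)]
        simp
      have h2 : (C ++ false :: (D ++ [true])).drop (i+1) = D ++ [true] := by
        rw [List.drop_append, (show i + 1 - C.length = 1 by omega)]
        have h3 : C.drop (i+1) = [] := by
          rw [List.drop_eq_nil_iff]
          omega
        rw [h3]
        simp
      simp only [h1, h2, List.dropLast_concat]

lemma partition (A : List Bool) (hA : A ≠ []) :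
    SF A = F1 A ∪ F2 A ∪ (Finset.range A.length).biUnion (F3 A) := by
  classical
  ext B
  constructor
  · intro hB
    have hP := mem_SF.mp hB
    obtain ⟨hlen, hcnt, hpc⟩ := hP
    have hBne : B ≠ [] := by
      intro h
      rw [h] at hlen
      simp at hlen
      exact hA (List.length_eq_zero_iff.mp hlen.symm)
    obtain ⟨B', b, rfl⟩ := concat_decomp hBne
    rw [Finset.mem_union, Finset.mem_union]
    cases b with
    | false =>
      exact Or.inl (Or.inl (mem_F1.mpr ⟨mem_SF.mp hB, List.getLast?_concat⟩))
    | true =>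
      by_cases hK : ∃ k, Kc A (B' ++ [true]) k
      · obtain ⟨k0, hk0⟩ := hK
        have hk0n : k0 ≤ A.length := by
          obtain ⟨h, _, _⟩ := hk0
          omega
        have hspec : Kc A (B' ++ [true]) (Nat.findGreatest (fun k => Kc A (B' ++ [true]) k) A.length) :=
          Nat.findGreatest_spec hk0n hk0
        have hmax : ∀ k, (Nat.findGreatest (fun k => Kc A (B' ++ [true]) k) A.length) < k →
            ¬ Kc A (B' ++ [true]) k := by
          intro k hk hKk
          by_cases hkn : k ≤ A.length
          · exact absurd hKk (Nat.findGreatest_is_greatest hk hkn)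
          · obtain ⟨h, _, _⟩ := hKk
            omega
        refine Or.inr (Finset.mem_biUnion.mpr ⟨_, ?_, mem_F3.mpr
          ⟨mem_SF.mp hB, List.getLast?_concat, hspec, hmax⟩⟩)
        rw [Finset.mem_range]
        obtain ⟨h, _, _⟩ := hspec
        omega
      · refine Or.inl (Or.inr (mem_F2.mpr ⟨mem_SF.mp hB, List.getLast?_concat, ?_⟩))
        exact fun k hKk => hK ⟨k, hKk⟩
  · intro hB
    rcases Finset.mem_union.mp hB with h1 | h2
    · rcases Finset.mem_union.mp h1 with h3 | h4
      · exact mem_SF.mpr (mem_F1.mp h3).1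
      · exact mem_SF.mpr (mem_F2.mp h4).1
    · obtain ⟨i, _, h5⟩ := Finset.mem_biUnion.mp h2
      exact mem_SF.mpr (mem_F3.mp h5).1

lemma disj12 (A : List Bool) : Disjoint (F1 A) (F2 A) := by
  rw [Finset.disjoint_left]
  intro B h1 h2
  have e1 := (mem_F1.mp h1).2
  have e2 := (mem_F2.mp h2).2.1
  rw [e1] at e2
  simp at e2

lemma disj123 (A : List Bool) :
    Disjoint (F1 A ∪ F2 A) ((Finset.range A.length).biUnion (F3 A)) := by
  classical
  rw [Finset.disjoint_left]
  intro B hu hb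
  obtain ⟨i, _, h5⟩ := Finset.mem_biUnion.mp hb
  obtain ⟨_, hend, hKc, _⟩ := mem_F3.mp h5
  rcases Finset.mem_union.mp hu with h1 | h2
  · have e1 := (mem_F1.mp h1).2
    rw [e1] at hend
    simp at hend
  · exact (mem_F2.mp h2).2.2 i hKc

lemma disj3 (A : List Bool) : ∀ x ∈ Finset.range A.length, ∀ y ∈ Finset.range A.length,
    x ≠ y → Disjoint (F3 A x) (F3 A y) := by
  intro x _ y _ hxy
  rw [Finset.disjoint_left]
  intro B h1 h2
  obtain ⟨_, _, hK1, hm1⟩ := mem_F3.mp h1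
  obtain ⟨_, _, hK2, hm2⟩ := mem_F3.mp h2
  rcases lt_or_gt_of_ne hxy with h | h
  · exact hm1 y h hK2
  · exact hm2 x h hK1

end WRaux

/-- For every nonempty binary sequence A:
`W(A) = (W(X) if A = X·0) + (W(Y) if A = 1·Y) + ∑_{A = X·01·Y} W(X)·W(Y)`,
where a decomposition `A = X·01·Y` is indexed by the length `i` of `X`. -/
theorem weight_recursion (A : List Bool) (hA : A ≠ []) :
    W A = (if A.getLast? = some false then W A.dropLast else 0)
        + (if A.head? = some true then W A.tail else 0)
        + ∑ i ∈ Finset.range A.length,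
            (if A = A.take i ++ false :: true :: A.drop (i + 2)
             then W (A.take i) * W (A.drop (i + 2)) else 0) := by
  classical
  rw [WRaux.W_eq, WRaux.partition A hA,
    Finset.card_union_of_disjoint (WRaux.disj123 A),
    Finset.card_union_of_disjoint (WRaux.disj12 A),
    Finset.card_biUnion (WRaux.disj3 A),
    WRaux.card_F1 A hA, WRaux.card_F2 A hA]
  congr 1
  exact Finset.sum_congr rfl (fun i _ => WRaux.card_F3 A i)
end
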